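/- Let H = (D, E) be a finite core digraph with vertex set D = {1, …, p}, let Ω be the orbit of the vertex 1 under Aut(H), and let Ω⁺ = {y ∈ D : (w, y) ∈ E for some w ∈ Ω}. For x ∈ D define M(x) as the maximum, over all tuples z = (z_1, …, z_p) ∈ D^p, of the quantity [ (z_1, x) ∈ E ] + Σ_{(i,j) ∈ E} [ (z_i, z_j) ∈ E ], where [P] denotes 1 if P holds and 0 otherwise. Then M(x) = |E| + 1 if x ∈ Ω⁺, and M(x) = |E| otherwise. -/

import Mathlib

/-!
Every endomorphism `z` of a finite core is an automorphism: some positive power of `z` is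
idempotent in the finite monoid of self-maps, hence a retraction, hence the identity. So the
score `[(z v₀, x) ∈ E] + #{edges preserved by z}` is at most `|E|`, unless `z` is an automorphism,
in which case it is `|E| + [(z v₀, x) ∈ E]`, and then `z v₀` ranges exactly over the orbit of
`v₀`.
-/

def IsEndo {V : Type} (E : V → V → Prop) (f : V → V) : Prop :=
  ∀ x y, E x y → E (f x) (f y)

def IsAuto {V : Type} (E : V → V → Prop) (g : V → V) : Prop :=
  Function.Bijective g ∧ ∀ x y, E x y ↔ E (g x) (g y)

theorem exists_isIdempotentElem_pow {M : Type*} [Monoid M] [Finite M] (a : M) :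
    ∃ k ≠ 0, IsIdempotentElem (a ^ k) := by
  obtain ⟨m, n, hne, hmn⟩ := Finite.exists_ne_map_eq_of_infinite (a ^ · : ℕ → M)
  wlog hlt : m < n generalizing m n
  · exact this n m hne.symm hmn.symm (by omega)
  obtain ⟨d, rfl⟩ := Nat.exists_eq_add_of_lt hlt
  have hperiod : ∀ t j, m ≤ j → a ^ (j + t * (d + 1)) = a ^ j := by
    intro t
    induction t with
    | zero => simp
    | succ t ih =>
      intro j hj
      obtain ⟨i, rfl⟩ := Nat.exists_eq_add_of_le hj
      calc a ^ (m + i + (t + 1) * (d + 1)) = a ^ (m + d + 1) * a ^ (i + t * (d + 1)) := by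
            rw [← pow_add]; ring_nf
        _ = a ^ (m + i + t * (d + 1)) := by rw [← hmn, ← pow_add, add_assoc]
        _ = a ^ (m + i) := ih _ hj
  -- a multiple of the period `d + 1` that is at least `m`
  refine ⟨(m + 1) * (d + 1), by positivity, ?_⟩
  rw [IsIdempotentElem, ← pow_add]
  exact hperiod (m + 1) _ (by nlinarith)

section Digraph

variable {V : Type} {E : V → V → Prop} {f g : V → V}

def IsCore (E : V → V → Prop) : Prop :=
  ∀ r : V → V, IsEndo E r → r ∘ r = r → r = id

theorem isEndo_id : IsEndo E id :=
  fun _ _ h => h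

theorem IsEndo.comp (hf : IsEndo E f) (hg : IsEndo E g) : IsEndo E (f ∘ g) :=
  fun x y h => hf _ _ (hg x y h)

theorem IsEndo.iterate (hf : IsEndo E f) : ∀ n, IsEndo E f^[n]
  | 0 => isEndo_id
  | n + 1 => (hf.iterate n).comp hf

theorem IsAuto.isEndo (hg : IsAuto E g) : IsEndo E g :=
  fun x y => (hg.2 x y).1

theorem IsCore.isAuto_of_isEndo [Finite V] (hcore : IsCore E) (hf : IsEndo E f) :
    IsAuto E f := by
  have : Finite (Function.End V) := inferInstanceAs (Finite (V → V))
  obtain ⟨k, hk, hidem⟩ := exists_isIdempotentElem_pow (M := Function.End V) f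
  have hid : f^[k] = id := hcore _ (hf.iterate k) hidem
  obtain ⟨n, rfl⟩ := Nat.exists_eq_succ_of_ne_zero hk
  have hleft : Function.LeftInverse f^[n] f := congrFun hid
  have hright : Function.RightInverse f^[n] f := fun x =>
    (Function.iterate_succ_apply' f n x).symm.trans (congrFun hid x)
  refine ⟨⟨hleft.injective, hright.surjective⟩, fun x y => ⟨hf x y, fun h => ?_⟩⟩
  simpa only [hleft _] using hf.iterate n _ _ h

theorem IsCore.exists_isAuto_iff_exists_isEndo [Finite V] (hcore : IsCore E)
    (P : (V → V) → Prop) : (∃ g, IsAuto E g ∧ P g) ↔ ∃ z, IsEndo E z ∧ P z :=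
  ⟨fun ⟨g, hg, hP⟩ => ⟨g, hg.isEndo, hP⟩,
    fun ⟨z, hz, hP⟩ => ⟨z, hcore.isAuto_of_isEndo hz, hP⟩⟩

theorem ncard_edges_preserved_of_isEndo (hf : IsEndo E f) :
    {p : V × V | E p.1 p.2 ∧ E (f p.1) (f p.2)}.ncard = {p : V × V | E p.1 p.2}.ncard := by
  congr 1
  ext p
  exact and_iff_left_of_imp (hf p.1 p.2)

theorem ncard_edges_preserved_lt_of_not_isEndo [Finite V] (hf : ¬IsEndo E f) :
    {p : V × V | E p.1 p.2 ∧ E (f p.1) (f p.2)}.ncard < {p : V × V | E p.1 p.2}.ncard := by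
  refine Set.ncard_lt_ncard (Set.ssubset_iff_subset_ne.2 ⟨fun p hp => hp.1, fun heq => hf ?_⟩)
  intro x y h
  exact (heq.symm ▸ h : (x, y) ∈ {p : V × V | E p.1 p.2 ∧ E (f p.1) (f p.2)}).2

end Digraph

open Classical in
/-- Let `H = (D, E)` be a finite core digraph with a distinguished vertex `v₀`
(the vertex `1`), let `Ω` be the orbit of `v₀` under `Aut(H)` and
`Ω⁺ = {y | ∃ w ∈ Ω, (w, y) ∈ E}`.  For `x ∈ D`, the maximum over tuples
`z : D → D` of `[(z v₀, x) ∈ E] + #{(i,j) ∈ E | (z i, z j) ∈ E}` equals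
`|E| + 1` if `x ∈ Ω⁺` and `|E|` otherwise. -/
theorem stmt_13 {D : Type} [Fintype D] (E : D → D → Prop) (v₀ : D)
    (hcore : ∀ r : D → D, IsEndo E r → r ∘ r = r → r = id) (x : D) :
    IsGreatest
      {c : ℕ | ∃ z : D → D,
        c = (if E (z v₀) x then 1 else 0) +
            {p : D × D | E p.1 p.2 ∧ E (z p.1) (z p.2)}.ncard}
      (if x ∈ {y | ∃ w ∈ {y' | ∃ g : D → D, IsAuto E g ∧ g v₀ = y'}, E w y}
        then {p : D × D | E p.1 p.2}.ncard + 1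
        else {p : D × D | E p.1 p.2}.ncard) := by
  have hΩ : x ∈ {y | ∃ w ∈ {y' | ∃ g : D → D, IsAuto E g ∧ g v₀ = y'}, E w y} ↔
      ∃ z, IsEndo E z ∧ E (z v₀) x := by
    simpa using IsCore.exists_isAuto_iff_exists_isEndo hcore (fun g => E (g v₀) x)
  constructor
  · split_ifs with hx
    · obtain ⟨z, hz, hzx⟩ := hΩ.1 hx
      exact ⟨z, by rw [ncard_edges_preserved_of_isEndo hz, if_pos hzx, add_comm]⟩
    · refine ⟨id, ?_⟩
      rw [ncard_edges_preserved_of_isEndo isEndo_id,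
        if_neg fun h => hx (hΩ.2 ⟨id, isEndo_id, h⟩), zero_add]
  · rintro _ ⟨z, rfl⟩
    by_cases hz : IsEndo E z
    · rw [ncard_edges_preserved_of_isEndo hz]
      split_ifs with hzx hx <;> first | omega | exact absurd (hΩ.2 ⟨z, hz, hzx⟩) hx
    · have := ncard_edges_preserved_lt_of_not_isEndo hz
      split_ifs <;> omega
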